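/- arXiv:1105.4122 — 6 statements merged into one kernel-verified Lean document; each statement's English description precedes it below -/
import Mathlib

section
/- Let K be a nonempty compact Hausdorff space and let μ : C(K) → ℝ be a normed functional with μ(0) = 0. Then: (a) any two members A, B of the family 𝒜_μ satisfy A ∩ B ≠ ∅ and A ∩ B ∈ 𝒜_μ (hence 𝒜_μ is closed under finite intersections); (b) the support S(μ) equals the intersection ⋂{A : A ∈ 𝒜_μ}; and (c) if in addition μ is weakly additive and monotone, then S(μ) ∈ 𝒜_μ. -/
open Set

variable {K : Type*} [TopologicalSpace K]

/-- A functional `μ` on `C(K, ℝ)` is *normed* if `μ 1 = 1`. -/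
def IsNormedFunctional (μ : C(K, ℝ) → ℝ) : Prop := μ 1 = 1

/-- `μ` is *weakly additive* if `μ (f + c·1) = μ f + c`. -/
def IsWeaklyAdditive (μ : C(K, ℝ) → ℝ) : Prop :=
  ∀ (f : C(K, ℝ)) (c : ℝ), μ (f + ContinuousMap.const K c) = μ f + c

/-- `μ` is *monotone* if `f ≤ g → μ f ≤ μ g`. -/
def IsMonotoneFunctional (μ : C(K, ℝ) → ℝ) : Prop :=
  ∀ f g : C(K, ℝ), f ≤ g → μ f ≤ μ g

/-- `μ` *preserves max*. -/
def PreservesMax (μ : C(K, ℝ) → ℝ) : Prop :=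
  ∀ f g : C(K, ℝ), μ (f ⊔ g) = max (μ f) (μ g)

/-- `μ` *preserves min*. -/
def PreservesMin (μ : C(K, ℝ) → ℝ) : Prop :=
  ∀ f g : C(K, ℝ), μ (f ⊓ g) = min (μ f) (μ g)

/-- `μ` *weakly preserves max*: `μ (max{f, c·1}) = max{μ f, c}`. -/
def WeaklyPreservesMax (μ : C(K, ℝ) → ℝ) : Prop :=
  ∀ (f : C(K, ℝ)) (c : ℝ), μ (f ⊔ ContinuousMap.const K c) = max (μ f) c

/-- `μ` *weakly preserves min*: `μ (min{f, c·1}) = min{μ f, c}`. -/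
def WeaklyPreservesMin (μ : C(K, ℝ) → ℝ) : Prop :=
  ∀ (f : C(K, ℝ)) (c : ℝ), μ (f ⊓ ContinuousMap.const K c) = min (μ f) c

/-- The support `S(μ)`: points `x` such that every open neighbourhood `O` of `x` admits
`f, g ∈ C(K)` agreeing off `O` with `μ f ≠ μ g`. -/
def functionalSupport (μ : C(K, ℝ) → ℝ) : Set K :=
  {x | ∀ O : Set K, IsOpen O → x ∈ O →
    ∃ f g : C(K, ℝ), (∀ y ∉ O, f y = g y) ∧ μ f ≠ μ g}

/-- The family `𝒜_μ` of nonempty closed sets `A` such that `μ f = μ g` whenever `f = g` on `A`. -/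
def AFamily (μ : C(K, ℝ) → ℝ) : Set (Set K) :=
  {A | A.Nonempty ∧ IsClosed A ∧
    ∀ f g : C(K, ℝ), (∀ x ∈ A, f x = g x) → μ f = μ g}

/-- The family `Λ_μ`. -/
def LFamily (μ : C(K, ℝ) → ℝ) : Set (Set K) :=
  {A | A.Nonempty ∧ IsClosed A ∧
    ∀ B : Set K, IsClosed B → A ∩ B = ∅ →
      ∃ g : C(K, ℝ), μ g = 0 ∧ (∀ x ∈ A, g x ≤ 0) ∧ ∀ x ∈ B, 0 < g x}
/-!
The members of `𝒜_μ` pairwise meet, because a Urysohn function separating two disjoint members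
would force `μ 0 = μ 1`; and two functions agreeing on `A ∩ B` can be linked by a function
(obtained by gluing and Tietze extension) agreeing with the first on `A` and with the second on
`B`, so `A ∩ B ∈ 𝒜_μ`. A point lies outside `S(μ)` exactly when it has an open neighbourhood
whose complement is in `𝒜_μ`, which gives `S(μ) = ⋂ 𝒜_μ`. Finally, if `f = g` on `S(μ)` and
`ε > 0`, compactness and directedness of `𝒜_μ` yield `A ∈ 𝒜_μ` on which `f < g + ε`; then
`μ f = μ (f ⊓ (g + ε)) ≤ μ g + ε` by monotonicity and weak additivity.
-/

universe u v in
theorem ContinuousMap.exists_eqOn_eqOn_of_eqOn_inter {X : Type u} {Y : Type v} [TopologicalSpace X]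
    [NormalSpace X] [TopologicalSpace Y] [TietzeExtension.{u, v} Y] {A B : Set X}
    (hA : IsClosed A) (hB : IsClosed B) (f g : C(X, Y)) (hfg : EqOn f g (A ∩ B)) :
    ∃ h : C(X, Y), EqOn h f A ∧ EqOn h g B := by
  classical
  set p : X → Y := A.piecewise f g
  have hpA : EqOn p f A := fun x hx => piecewise_eq_of_mem _ _ _ hx
  have hpB : EqOn p g B := fun x hx => by
    by_cases hxA : x ∈ A
    · exact (hpA hxA).trans (hfg ⟨hxA, hx⟩)
    · exact piecewise_eq_of_notMem _ _ _ hxA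
  have hp : ContinuousOn p (A ∪ B) :=
    (f.continuous.continuousOn.congr hpA).union_of_isClosed
      (g.continuous.continuousOn.congr hpB) hA hB
  obtain ⟨h, hh⟩ := ContinuousMap.exists_restrict_eq (hA.union hB) ⟨_, hp.domRestrict⟩
  have hhp : ∀ x ∈ A ∪ B, h x = p x := fun x hx => DFunLike.congr_fun hh ⟨x, hx⟩
  exact ⟨h, fun x hx => (hhp x (.inl hx)).trans (hpA hx),
    fun x hx => (hhp x (.inr hx)).trans (hpB hx)⟩

section AFamily

variable {μ : C(K, ℝ) → ℝ} {A B : Set K}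

instance [Nonempty K] : Nonempty (AFamily μ) :=
  ⟨⟨univ, univ_nonempty, isClosed_univ, fun _ _ hfg =>
    congrArg μ (ContinuousMap.ext fun x => hfg x trivial)⟩⟩

theorem nonempty_inter_of_mem_aFamily [NormalSpace K] (h01 : μ 0 ≠ μ 1)
    (hA : A ∈ AFamily μ) (hB : B ∈ AFamily μ) : (A ∩ B).Nonempty := by
  by_contra hAB
  obtain ⟨u, hu0, hu1, -⟩ := exists_continuous_zero_one_of_isClosed hA.2.1 hB.2.1
    (disjoint_iff_inter_eq_empty.mpr (not_nonempty_iff_eq_empty.mp hAB))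
  exact h01 ((hA.2.2 u 0 fun x hx => hu0 hx).symm.trans (hB.2.2 u 1 fun x hx => hu1 hx))

theorem inter_mem_aFamily [NormalSpace K] (h01 : μ 0 ≠ μ 1)
    (hA : A ∈ AFamily μ) (hB : B ∈ AFamily μ) : A ∩ B ∈ AFamily μ := by
  refine ⟨nonempty_inter_of_mem_aFamily h01 hA hB, hA.2.1.inter hB.2.1, fun f g hfg => ?_⟩
  obtain ⟨h, hhf, hhg⟩ := ContinuousMap.exists_eqOn_eqOn_of_eqOn_inter hA.2.1 hB.2.1 f g hfg
  exact (hA.2.2 h f hhf).symm.trans (hB.2.2 h g hhg)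

theorem directed_aFamily [NormalSpace K] (h01 : μ 0 ≠ μ 1) :
    Directed (· ⊇ ·) (Subtype.val : AFamily μ → Set K) := fun A B =>
  ⟨⟨_, inter_mem_aFamily h01 A.2 B.2⟩, inter_subset_left, inter_subset_right⟩

theorem functionalSupport_eq_sInter_aFamily (h01 : μ 0 ≠ μ 1) :
    functionalSupport μ = ⋂₀ AFamily μ := by
  ext x
  refine ⟨fun hx A hA => ?_, fun hx O hO hxO => ?_⟩
  · by_contra hxA
    obtain ⟨f, g, hfg, hμ⟩ := hx Aᶜ hA.2.1.isOpen_compl hxA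
    exact hμ (hA.2.2 f g fun y hy => hfg y (not_not_intro hy))
  · rcases (Oᶜ).eq_empty_or_nonempty with hOc | hOc
    · exact ⟨0, 1, fun y hy => (hOc.subset hy).elim, h01⟩
    · have hOcA : Oᶜ ∉ AFamily μ := fun hOcA => hx _ hOcA hxO
      simp only [AFamily, mem_ofPred_eq, hOc, hO.isClosed_compl, true_and, not_forall] at hOcA
      obtain ⟨f, g, hfg, hμ⟩ := hOcA
      exact ⟨f, g, hfg, hμ⟩

variable [CompactSpace K] [NormalSpace K] [Nonempty K]

theorem nonempty_sInter_aFamily (h01 : μ 0 ≠ μ 1) : (⋂₀ AFamily μ).Nonempty := by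
  rw [sInter_eq_iInter]
  exact IsCompact.nonempty_iInter_of_directed_nonempty_isCompact_isClosed _
    (directed_aFamily h01) (fun A => A.2.1) (fun A => A.2.2.1.isCompact) fun A => A.2.2.1

theorem exists_mem_aFamily_forall_lt_add (h01 : μ 0 ≠ μ 1) {f g : C(K, ℝ)}
    (hfg : ∀ x ∈ ⋂₀ AFamily μ, f x = g x) {ε : ℝ} (hε : 0 < ε) :
    ∃ A ∈ AFamily μ, ∀ x ∈ A, f x < g x + ε := by
  set C : Set K := {x | g x + ε ≤ f x}
  have hC : IsClosed C := isClosed_le (by fun_prop) (by fun_prop)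
  have hCS : C ∩ ⋂ A : AFamily μ, A.1 = ∅ := by
    refine eq_empty_of_forall_notMem fun x ⟨hxC, hxS⟩ => ?_
    have : f x = g x := hfg x (sInter_eq_iInter ▸ hxS)
    simp only [C, mem_ofPred_eq, this] at hxC
    linarith
  obtain ⟨⟨A, hA⟩, hCA⟩ := hC.isCompact.elim_directed_family_closed _ (fun A => A.2.2.1) hCS
    (directed_aFamily h01)
  exact ⟨A, hA, fun x hx => lt_of_not_ge fun hxC => (eq_empty_iff_forall_notMem.mp hCA) x ⟨hxC, hx⟩⟩

theorem le_of_eqOn_sInter_aFamily (h01 : μ 0 ≠ μ 1) (hwa : IsWeaklyAdditive μ)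
    (hmono : IsMonotoneFunctional μ) {f g : C(K, ℝ)} (hfg : ∀ x ∈ ⋂₀ AFamily μ, f x = g x) :
    μ f ≤ μ g := by
  refine le_of_forall_pos_le_add fun ε hε => ?_
  obtain ⟨A, hA, hfgA⟩ := exists_mem_aFamily_forall_lt_add h01 hfg hε
  calc μ f = μ (f ⊓ (g + ContinuousMap.const K ε)) :=
        hA.2.2 _ _ fun x hx => (min_eq_left (hfgA x hx).le).symm
    _ ≤ μ (g + ContinuousMap.const K ε) := hmono _ _ inf_le_right
    _ = μ g + ε := hwa g ε

theorem sInter_aFamily_mem (h01 : μ 0 ≠ μ 1) (hwa : IsWeaklyAdditive μ)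
    (hmono : IsMonotoneFunctional μ) : ⋂₀ AFamily μ ∈ AFamily μ :=
  ⟨nonempty_sInter_aFamily h01, isClosed_sInter fun _ hA => hA.2.1, fun _ _ hfg =>
    (le_of_eqOn_sInter_aFamily h01 hwa hmono hfg).antisymm
      (le_of_eqOn_sInter_aFamily h01 hwa hmono fun x hx => (hfg x hx).symm)⟩

end AFamily

/-- for a normed functional `μ` with `μ 0 = 0` on a nonempty compact Hausdorff
space: (a) `𝒜_μ` is closed under (nonempty) binary intersections, (b) `S(μ) = ⋂ 𝒜_μ`,
(c) if moreover `μ` is weakly additive and monotone then `S(μ) ∈ 𝒜_μ`. -/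
theorem statement0 {K : Type*} [TopologicalSpace K] [CompactSpace K] [T2Space K] [Nonempty K]
    (μ : C(K, ℝ) → ℝ) (hnorm : IsNormedFunctional μ) (hzero : μ 0 = 0) :
    (∀ A ∈ AFamily μ, ∀ B ∈ AFamily μ, (A ∩ B).Nonempty ∧ A ∩ B ∈ AFamily μ) ∧
    functionalSupport μ = ⋂₀ AFamily μ ∧
    (IsWeaklyAdditive μ → IsMonotoneFunctional μ → functionalSupport μ ∈ AFamily μ) := by
  have h01 : μ 0 ≠ μ 1 := by rw [hzero, hnorm]; exact zero_ne_one
  refine ⟨fun A hA B hB => ⟨nonempty_inter_of_mem_aFamily h01 hA hB,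
    inter_mem_aFamily h01 hA hB⟩, functionalSupport_eq_sInter_aFamily h01, fun hwa hmono => ?_⟩
  rw [functionalSupport_eq_sInter_aFamily h01]
  exact sInter_aFamily_mem h01 hwa hmono
end

section
/- Let K be a nonempty compact Hausdorff space and let μ : C(K) → ℝ be a normed, weakly additive, monotone functional. Then the support S(μ) is nonempty and μ(f) = μ(g) for all f, g ∈ C(K) that agree on S(μ); that is, S(μ) ∈ 𝒜_μ. -/
open Set

variable {K : Type*} [TopologicalSpace K]

/-!
Call a set `O` null for `μ` if functions agreeing off `O` have the same value. A monotone,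
weakly additive `μ` is 1-Lipschitz for the sup norm, so two functions that differ by at most `ε`
off a null set have values within `ε`; with Urysohn's lemma this shows that the union of two
null open sets is null. The complement of `S(μ)` is covered by null open sets, so by compactness
each closed set `{|f - g| ≥ ε}` disjoint from `S(μ)` lies in a null open set, and letting `ε → 0`
gives `μ f = μ g` when `f = g` on `S(μ)`. Weak additivity makes `μ` non-constant, so `S(μ)`
cannot be empty.
-/

variable {μ : C(K, ℝ) → ℝ}

def IsNullSet (μ : C(K, ℝ) → ℝ) (O : Set K) : Prop :=
  ∀ f g : C(K, ℝ), EqOn f g Oᶜ → μ f = μ g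

theorem notMem_functionalSupport_iff {x : K} :
    x ∉ functionalSupport μ ↔ ∃ O : Set K, IsOpen O ∧ x ∈ O ∧ IsNullSet μ O := by
  simp only [functionalSupport, IsNullSet, EqOn, mem_ofPred_eq, mem_compl_iff]
  push Not
  rfl

theorem isClosed_functionalSupport : IsClosed (functionalSupport μ) := by
  refine isOpen_compl_iff.mp (isOpen_iff_forall_mem_open.mpr fun x hx => ?_)
  obtain ⟨O, hO, hxO, hnull⟩ := notMem_functionalSupport_iff.mp hx
  exact ⟨O, fun y hy => notMem_functionalSupport_iff.mpr ⟨O, hO, hy, hnull⟩, hO, hxO⟩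

theorem isNullSet_empty : IsNullSet μ ∅ :=
  fun _ _ hfg => congrArg μ (ContinuousMap.ext fun x => hfg (notMem_empty x))

theorem nonempty_of_forall_eqOn (hwa : IsWeaklyAdditive μ) {A : Set K}
    (hA : ∀ f g : C(K, ℝ), EqOn f g A → μ f = μ g) : A.Nonempty := by
  by_contra hempty
  rw [not_nonempty_iff_eq_empty] at hempty
  have hconst := hA (0 + ContinuousMap.const K 1) 0 (by simp [hempty])
  linarith [hwa 0 1]

section Compact

variable [CompactSpace K]

theorem dist_map_le (hwa : IsWeaklyAdditive μ) (hmono : IsMonotoneFunctional μ)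
    (f g : C(K, ℝ)) : dist (μ f) (μ g) ≤ dist f g := by
  have key : ∀ u v : C(K, ℝ), μ u ≤ μ v + dist u v := fun u v => by
    rw [← hwa]
    refine hmono _ _ fun x => ?_
    have hx : dist (u x) (v x) ≤ dist u v := ContinuousMap.dist_apply_le_dist x
    rw [Real.dist_eq] at hx
    change u x ≤ v x + dist u v
    linarith [le_abs_self (u x - v x)]
  rw [Real.dist_eq, abs_sub_le_iff]
  exact ⟨by linarith [key f g], by linarith [key g f, dist_comm f g]⟩

/-- The proof replaces `f` by its clamp `max (min f (g + ε)) (g - ε)`, which agrees with `f` off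
`U` and is `ε`-close to `g` everywhere. -/
theorem dist_map_le_of_isNullSet (hwa : IsWeaklyAdditive μ) (hmono : IsMonotoneFunctional μ)
    {U : Set K} (hU : IsNullSet μ U) {f g : C(K, ℝ)} {ε : ℝ} (hε : 0 ≤ ε)
    (hfg : ∀ x ∉ U, |f x - g x| ≤ ε) : dist (μ f) (μ g) ≤ ε := by
  set f' := f ⊓ (g + ContinuousMap.const K ε) ⊔ (g - ContinuousMap.const K ε)
  have hf' : μ f' = μ f := hU _ _ fun x hx => by
    obtain ⟨h₁, h₂⟩ := abs_le.mp (hfg x hx)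
    simp only [f', ContinuousMap.sup_apply, ContinuousMap.inf_apply, ContinuousMap.add_apply,
      ContinuousMap.sub_apply, ContinuousMap.const_apply]
    rw [min_eq_left (by linarith), max_eq_left (by linarith)]
  have hf'g : dist f' g ≤ ε := (ContinuousMap.dist_le hε).mpr fun x => by
    simp only [f', Real.dist_eq, abs_le, ContinuousMap.sup_apply, ContinuousMap.inf_apply,
      ContinuousMap.add_apply, ContinuousMap.sub_apply, ContinuousMap.const_apply]
    constructor
    · linarith [le_max_right (min (f x) (g x + ε)) (g x - ε)]
    · linarith [max_le (min_le_right (f x) (g x + ε)) (by linarith : g x - ε ≤ g x + ε)]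
  calc dist (μ f) (μ g) = dist (μ f') (μ g) := by rw [hf']
    _ ≤ dist f' g := dist_map_le hwa hmono f' g
    _ ≤ ε := hf'g

variable [NormalSpace K]

/-- For `f = g` off `O₁ ∪ O₂`, the function `f + φ (g - f)` interpolates between them: with the
Urysohn function `φ` it equals `f` off `O₁` and stays `ε`-close to `g` off `O₂`. -/
theorem IsNullSet.union (hwa : IsWeaklyAdditive μ) (hmono : IsMonotoneFunctional μ)
    {O₁ O₂ : Set K} (hO₁ : IsOpen O₁) (hO₂ : IsOpen O₂)
    (h₁ : IsNullSet μ O₁) (h₂ : IsNullSet μ O₂) : IsNullSet μ (O₁ ∪ O₂) := by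
  intro f g hfg
  refine eq_of_forall_dist_le fun ε hε => ?_
  set C : Set K := {x | ε ≤ |f x - g x|}
  have hC : IsClosed C := isClosed_le continuous_const (by fun_prop)
  have hdisj : Disjoint O₁ᶜ (C \ O₂) := Set.disjoint_left.mpr fun x hx₁ hx => by
    have hx' : ε ≤ |f x - g x| := hx.1
    rw [hfg (by simp [hx₁, hx.2]), sub_self, abs_zero] at hx'
    linarith
  obtain ⟨φ, hφ₀, hφ₁, hφ⟩ :=
    exists_continuous_zero_one_of_isClosed hO₁.isClosed_compl (hC.sdiff hO₂) hdisj
  set h := f + φ * (g - f)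
  have hh : μ h = μ f := h₁ _ _ fun x hx => by simp [h, hφ₀ hx]
  have hhg : ∀ x ∉ O₂, |h x - g x| ≤ ε := fun x hx => by
    have hsplit : h x - g x = (1 - φ x) * (f x - g x) := by simp [h]; ring
    rw [hsplit, abs_mul]
    by_cases hxC : x ∈ C
    · simp [hφ₁ ⟨hxC, hx⟩, hε.le]
    · have h1φ : |1 - φ x| ≤ 1 := abs_le.mpr ⟨by linarith [(hφ x).2], by linarith [(hφ x).1]⟩
      calc |1 - φ x| * |f x - g x| ≤ 1 * ε :=
            mul_le_mul h1φ (le_of_not_ge hxC) (abs_nonneg _) zero_le_one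
        _ = ε := one_mul ε
  rw [← hh]
  exact dist_map_le_of_isNullSet hwa hmono h₂ hε.le hhg

theorem exists_isOpen_isNullSet_superset (hwa : IsWeaklyAdditive μ)
    (hmono : IsMonotoneFunctional μ) {D : Set K} (hD : IsCompact D)
    (hDS : Disjoint D (functionalSupport μ)) :
    ∃ U : Set K, IsOpen U ∧ D ⊆ U ∧ IsNullSet μ U := by
  refine hD.induction_on ⟨∅, isOpen_empty, subset_rfl, isNullSet_empty⟩
    (fun s t hst ⟨U, hU, htU, hnull⟩ => ⟨U, hU, hst.trans htU, hnull⟩)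
    (fun s t ⟨U, hU, hsU, hUnull⟩ ⟨V, hV, htV, hVnull⟩ =>
      ⟨U ∪ V, hU.union hV, union_subset_union hsU htV, hUnull.union hwa hmono hU hV hVnull⟩)
    fun x hx => ?_
  obtain ⟨O, hO, hxO, hnull⟩ :=
    notMem_functionalSupport_iff.mp (hDS.notMem_of_mem_left hx)
  exact ⟨O, mem_nhdsWithin_of_mem_nhds (hO.mem_nhds hxO), O, hO, subset_rfl, hnull⟩

theorem map_eq_of_eqOn_functionalSupport (hwa : IsWeaklyAdditive μ)
    (hmono : IsMonotoneFunctional μ) {f g : C(K, ℝ)} (hfg : EqOn f g (functionalSupport μ)) :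
    μ f = μ g := by
  refine eq_of_forall_dist_le fun ε hε => ?_
  set D : Set K := {x | ε ≤ |f x - g x|}
  have hD : IsClosed D := isClosed_le continuous_const (by fun_prop)
  have hDS : Disjoint D (functionalSupport μ) := Set.disjoint_left.mpr fun x hxD hxS => by
    have hx : ε ≤ |f x - g x| := hxD
    rw [hfg hxS, sub_self, abs_zero] at hx
    linarith
  obtain ⟨U, -, hDU, hnull⟩ := exists_isOpen_isNullSet_superset hwa hmono hD.isCompact hDS
  refine dist_map_le_of_isNullSet hwa hmono hnull hε.le fun x hx => ?_
  exact le_of_lt (not_le.mp fun hxD => hx (hDU hxD))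

end Compact

theorem statement1_general {K : Type*} [TopologicalSpace K] [CompactSpace K] [T2Space K]
    (μ : C(K, ℝ) → ℝ) (hwa : IsWeaklyAdditive μ)
    (hmono : IsMonotoneFunctional μ) :
    (functionalSupport μ).Nonempty ∧
    (∀ f g : C(K, ℝ), (∀ x ∈ functionalSupport μ, f x = g x) → μ f = μ g) ∧
    functionalSupport μ ∈ AFamily μ := by
  have heq : ∀ f g : C(K, ℝ), (∀ x ∈ functionalSupport μ, f x = g x) → μ f = μ g :=
    fun _ _ => map_eq_of_eqOn_functionalSupport hwa hmono
  have hne := nonempty_of_forall_eqOn hwa heq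
  exact ⟨hne, heq, hne, isClosed_functionalSupport, heq⟩

/-- for a normed, weakly additive, monotone functional `μ` on a nonempty compact
Hausdorff space, the support `S(μ)` is nonempty and `μ f = μ g` whenever `f = g` on `S(μ)`;
that is, `S(μ) ∈ 𝒜_μ`. -/
theorem statement1 {K : Type*} [TopologicalSpace K] [CompactSpace K] [T2Space K] [Nonempty K]
    (μ : C(K, ℝ) → ℝ) (hnorm : IsNormedFunctional μ) (hwa : IsWeaklyAdditive μ)
    (hmono : IsMonotoneFunctional μ) :
    (functionalSupport μ).Nonempty ∧
    (∀ f g : C(K, ℝ), (∀ x ∈ functionalSupport μ, f x = g x) → μ f = μ g) ∧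
    functionalSupport μ ∈ AFamily μ :=
  statement1_general μ hwa hmono
end

section
/- Let K be a nonempty compact Hausdorff space and let μ : C(K) → ℝ be a normed, monotone, weakly additive functional that weakly preserves both max and min. Then for every f ∈ C(K), μ(f) = inf over A ∈ Λ_μ of sup{f(x) : x ∈ A}. -/
/-!
Monotonicity together with `μ (c·1) = c` forces `f ≤ μ f` somewhere, and `f - μ f` witnesses
that `{f ≤ μ f}` lies in `Λ_μ`; so the infimum is at most `μ f`. Conversely, if `f < t` on some
`A ∈ Λ_μ`, separate `A` from `{f ≥ t}` by `g` with `μ g = 0`. On the compact set `{f ≥ t}` we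
have `g ≥ δ > 0`, hence `min f (t + δ) ≤ min (max g 0) δ + t`, and applying `μ` (using the weak
lattice and additivity rules) gives `min (μ f) (t + δ) ≤ t`, i.e. `μ f ≤ t`.
-/

open Set

variable {K : Type*} [TopologicalSpace K]

section LFamily

variable {μ : C(K, ℝ) → ℝ}

theorem map_const_of_isNormed_of_isWeaklyAdditive (hnorm : IsNormedFunctional μ)
    (hwa : IsWeaklyAdditive μ) (c : ℝ) : μ (ContinuousMap.const K c) = c := by
  have h0 : μ 0 = 0 := by
    have h := hwa 1 (-1)
    rwa [show (1 : C(K, ℝ)) + ContinuousMap.const K (-1) = 0 by ext; simp, hnorm,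
      add_neg_cancel] at h
  simpa [h0] using hwa 0 c

theorem exists_apply_le_map [CompactSpace K] [Nonempty K] (hmono : IsMonotoneFunctional μ)
    (hconst : ∀ c, μ (ContinuousMap.const K c) = c) (f : C(K, ℝ)) : ∃ x, f x ≤ μ f := by
  obtain ⟨x, -, hx⟩ := isCompact_univ.exists_isMinOn univ_nonempty f.continuous.continuousOn
  have := hmono (ContinuousMap.const K (f x)) f
    (ContinuousMap.le_def.mpr fun y => hx (mem_univ y))
  exact ⟨x, by rwa [hconst] at this⟩

theorem setOf_apply_le_map_mem_LFamily [CompactSpace K] [Nonempty K]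
    (hmono : IsMonotoneFunctional μ) (hwa : IsWeaklyAdditive μ)
    (hconst : ∀ c, μ (ContinuousMap.const K c) = c) (f : C(K, ℝ)) :
    {x | f x ≤ μ f} ∈ LFamily μ := by
  refine ⟨exists_apply_le_map hmono hconst f, isClosed_le f.continuous continuous_const, ?_⟩
  intro B _ hdisj
  refine ⟨f + ContinuousMap.const K (-μ f), by rw [hwa, add_neg_cancel], ?_, ?_⟩
  · intro x (hx : f x ≤ μ f)
    simpa using hx
  · intro x hxB
    have hx : ¬ f x ≤ μ f := fun hx => (eq_empty_iff_forall_notMem.mp hdisj) x ⟨hx, hxB⟩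
    simpa using hx

theorem map_le_of_forall_lt_of_mem_LFamily [CompactSpace K] (hmono : IsMonotoneFunctional μ)
    (hwa : IsWeaklyAdditive μ) (hwmax : WeaklyPreservesMax μ) (hwmin : WeaklyPreservesMin μ)
    {A : Set K} (hA : A ∈ LFamily μ) {f : C(K, ℝ)} {t : ℝ} (hf : ∀ x ∈ A, f x < t) :
    μ f ≤ t := by
  set B := (f : K → ℝ) ⁻¹' Ici t
  have hB : IsClosed B := isClosed_Ici.preimage f.continuous
  have hdisj : A ∩ B = ∅ :=
    eq_empty_iff_forall_notMem.mpr fun x ⟨hxA, hxB⟩ => (hf x hxA).not_ge hxB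
  obtain ⟨g, hg0, -, hgB⟩ := hA.2.2 B hB hdisj
  obtain ⟨δ, hδ, hδB⟩ := hB.isCompact.exists_forall_le' g.continuous.continuousOn hgB
  set u := (g ⊔ ContinuousMap.const K 0) ⊓ ContinuousMap.const K δ + ContinuousMap.const K t
  have hu : μ u = t := by
    rw [hwa, hwmin, hwmax, hg0, max_self, min_eq_left hδ.le, zero_add]
  have hfu : f ⊓ ContinuousMap.const K (t + δ) ≤ u := by
    refine ContinuousMap.le_def.mpr fun x => ?_
    simp only [u, ContinuousMap.inf_apply, ContinuousMap.sup_apply, ContinuousMap.add_apply,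
      ContinuousMap.const_apply]
    by_cases hxB : t ≤ f x
    · rw [min_eq_right (le_max_of_le_left (hδB x hxB))]
      linarith [min_le_right (f x) (t + δ)]
    · linarith [min_le_left (f x) (t + δ), le_min (le_max_right (g x) 0) hδ.le]
  have key : min (μ f) (t + δ) ≤ t := by
    have := hmono _ _ hfu
    rwa [hwmin, hu] at this
  exact (min_le_iff.mp key).resolve_right (by linarith)

theorem map_le_sSup_image_of_mem_LFamily [CompactSpace K] (hmono : IsMonotoneFunctional μ)
    (hwa : IsWeaklyAdditive μ) (hwmax : WeaklyPreservesMax μ) (hwmin : WeaklyPreservesMin μ)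
    {A : Set K} (hA : A ∈ LFamily μ) (f : C(K, ℝ)) : μ f ≤ sSup ((f : K → ℝ) '' A) := by
  have hbdd : BddAbove ((f : K → ℝ) '' A) := (hA.2.1.isCompact.image f.continuous).bddAbove
  refine le_of_forall_gt_imp_ge_of_dense fun t ht =>
    map_le_of_forall_lt_of_mem_LFamily hmono hwa hwmax hwmin hA fun x hx => ?_
  exact (le_csSup hbdd (mem_image_of_mem f hx)).trans_lt ht

end LFamily

theorem statement2_general {K : Type*} [TopologicalSpace K] [CompactSpace K] [Nonempty K]
    (μ : C(K, ℝ) → ℝ) (hnorm : IsNormedFunctional μ) (hmono : IsMonotoneFunctional μ)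
    (hwa : IsWeaklyAdditive μ) (hwmax : WeaklyPreservesMax μ) (hwmin : WeaklyPreservesMin μ) :
    ∀ f : C(K, ℝ), μ f = sInf ((fun A => sSup ((f : K → ℝ) '' A)) '' LFamily μ) := by
  intro f
  have hconst := map_const_of_isNormed_of_isWeaklyAdditive hnorm hwa
  have hA₀ := setOf_apply_le_map_mem_LFamily hmono hwa hconst f
  have hlower : μ f ∈ lowerBounds ((fun A => sSup ((f : K → ℝ) '' A)) '' LFamily μ) := by
    rintro _ ⟨A, hA, rfl⟩
    exact map_le_sSup_image_of_mem_LFamily hmono hwa hwmax hwmin hA f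
  have hsup : sSup ((f : K → ℝ) '' {x | f x ≤ μ f}) ≤ μ f :=
    csSup_le (hA₀.1.image f) (by rintro _ ⟨x, hx, rfl⟩; exact hx)
  have hmem : μ f ∈ (fun A => sSup ((f : K → ℝ) '' A)) '' LFamily μ :=
    ⟨_, hA₀, le_antisymm hsup (hlower (mem_image_of_mem _ hA₀))⟩
  exact (IsLeast.csInf_eq ⟨hmem, hlower⟩).symm

/-- for a normed, monotone, weakly additive functional `μ` weakly preserving
both max and min, `μ f = inf_{A ∈ Λ_μ} sup {f x : x ∈ A}`. -/
theorem statement2 {K : Type*} [TopologicalSpace K] [CompactSpace K] [T2Space K] [Nonempty K]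
    (μ : C(K, ℝ) → ℝ) (hnorm : IsNormedFunctional μ) (hmono : IsMonotoneFunctional μ)
    (hwa : IsWeaklyAdditive μ) (hwmax : WeaklyPreservesMax μ) (hwmin : WeaklyPreservesMin μ) :
    ∀ f : C(K, ℝ), μ f = sInf ((fun A => sSup ((f : K → ℝ) '' A)) '' LFamily μ) :=
  statement2_general μ hnorm hmono hwa hwmax hwmin
end

section
/- Let K be a nonempty compact Hausdorff space and let μ : C(K) → ℝ be a normed, monotone, weakly additive functional that weakly preserves both max and min. Then a nonempty closed set A ⊆ K belongs to Λ_μ if and only if μ(f) ≠ 0 for every open set O with A ⊆ O and every f ∈ C_A(O). -/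
/-!
If `A ∈ Λ_μ` and `f ∈ C_A(O)` is `-1` on `cl U`, separate `A` from `Uᶜ` by some `g` with
`μ g = 0`; on the compact set `Uᶜ` we have `g ≥ δ > 0`, so `f ≤ max (min g δ - δ) (-1)`, and the
weak lattice and additivity properties give `μ f ≤ max (-δ) (-1) < 0`.

Conversely, given `B` disjoint from `A`, take an Urysohn function `u` which is `0` near `A` and
`1` on `B`. Then `u - 1 ∈ C_A(Bᶜ)`, so `μ u ≠ 1`; with `0 ≤ μ u ≤ 1` the function
`u - μ u` witnesses the separation of `A` from `B`.
-/

open Set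

variable {K : Type*} [TopologicalSpace K]

/-- The family `C_A(O)` of continuous functions `f : K → [-1,0]` that are `-1` on the closure
of some open `U` with `A ⊆ U ⊆ cl U ⊆ O` and vanish off `O`. -/
def CFam {K : Type*} [TopologicalSpace K] (A O : Set K) : Set C(K, ℝ) :=
  {f | (∀ x, f x ∈ Set.Icc (-1 : ℝ) 0) ∧
    ∃ U : Set K, IsOpen U ∧ A ⊆ U ∧ closure U ⊆ O ∧
      (∀ x ∈ closure U, f x = -1) ∧ ∀ x ∉ O, f x = 0}

open ContinuousMap

variable {μ : C(K, ℝ) → ℝ}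

lemma IsWeaklyAdditive.map_zero (hnorm : IsNormedFunctional μ) (hwa : IsWeaklyAdditive μ) :
    μ 0 = 0 := by
  have h := hwa 0 1
  rw [show (0 : C(K, ℝ)) + const K 1 = 1 by ext; simp, hnorm] at h
  linarith

lemma map_truncate (hwa : IsWeaklyAdditive μ) (hwmax : WeaklyPreservesMax μ)
    (hwmin : WeaklyPreservesMin μ) (g : C(K, ℝ)) (δ c : ℝ) :
    μ ((g ⊓ const K δ + const K (-δ)) ⊔ const K c) = max (min (μ g) δ - δ) c := by
  rw [hwmax, hwa, hwmin, sub_eq_add_neg]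

lemma map_lt_zero_of_mem_LFamily [CompactSpace K] (hmono : IsMonotoneFunctional μ)
    (hwa : IsWeaklyAdditive μ) (hwmax : WeaklyPreservesMax μ) (hwmin : WeaklyPreservesMin μ)
    {A O : Set K} (hA : A ∈ LFamily μ) {f : C(K, ℝ)} (hf : f ∈ CFam A O) : μ f < 0 := by
  obtain ⟨hf_range, U, hU, hAU, -, hf_closure, -⟩ := hf
  obtain ⟨g, hg0, -, hg_pos⟩ := hA.2.2 Uᶜ hU.isClosed_compl
    (disjoint_compl_right.mono_left hAU).inter_eq
  obtain ⟨δ, hδ, hgδ⟩ := hU.isClosed_compl.isCompact.exists_forall_le'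
    g.continuous.continuousOn hg_pos
  have hf_le : f ≤ (g ⊓ const K δ + const K (-δ)) ⊔ const K (-1) := by
    intro x
    by_cases hx : x ∈ U
    · simp [hf_closure x (subset_closure hx)]
    · simp [min_eq_right (hgδ x hx), (hf_range x).2]
  calc μ f ≤ max (min (μ g) δ - δ) (-1) :=
        map_truncate hwa hwmax hwmin g δ (-1) ▸ hmono _ _ hf_le
    _ < 0 := by rw [hg0, min_eq_left hδ.le]; exact max_lt (by linarith) (by norm_num)

lemma mem_LFamily_of_forall_map_ne_zero [NormalSpace K] (hnorm : IsNormedFunctional μ)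
    (hmono : IsMonotoneFunctional μ) (hwa : IsWeaklyAdditive μ) {A : Set K} (hA : A.Nonempty)
    (hAcl : IsClosed A) (h : ∀ O : Set K, IsOpen O → A ⊆ O → ∀ f ∈ CFam A O, μ f ≠ 0) :
    A ∈ LFamily μ := by
  refine ⟨hA, hAcl, fun B hB hAB => ?_⟩
  have hAB' : A ⊆ Bᶜ := disjoint_iff_inter_eq_empty.mpr hAB |>.subset_compl_right
  obtain ⟨V, hV, hAV, hVB⟩ := normal_exists_closure_subset hAcl hB.isOpen_compl hAB'
  obtain ⟨u, hu0, hu1, hu_range⟩ := exists_continuous_zero_one_of_isClosed isClosed_closure hB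
    (subset_compl_iff_disjoint_right.mp hVB)
  have hu_nonneg : 0 ≤ μ u := hwa.map_zero hnorm ▸ hmono 0 u fun x => (hu_range x).1
  have hu_le_one : μ u ≤ 1 := hnorm ▸ hmono u 1 fun x => (hu_range x).2
  have hu_sub_one : u + const K (-1) ∈ CFam A Bᶜ := by
    refine ⟨fun x => ?_, V, hV, hAV, hVB, fun x hx => ?_, fun x hx => ?_⟩
    · simp only [coe_add, coe_const, Pi.add_apply, Function.const_apply, mem_Icc]
      constructor <;> linarith [(hu_range x).1, (hu_range x).2]
    · simp [hu0 hx]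
    · simp [hu1 (not_not.mp hx)]
  have hu_ne_one : μ u ≠ 1 := fun h1 =>
    h Bᶜ hB.isOpen_compl hAB' _ hu_sub_one (by rw [hwa, h1]; norm_num)
  refine ⟨u + const K (-μ u), by rw [hwa]; ring, fun x hx => ?_, fun x hx => ?_⟩
  · simp [hu0 (subset_closure (hAV hx)), hu_nonneg]
  · simp [hu1 hx, hu_le_one.lt_of_ne hu_ne_one]

theorem statement3_general {K : Type*} [TopologicalSpace K] [CompactSpace K] [T2Space K]
    (μ : C(K, ℝ) → ℝ) (hnorm : IsNormedFunctional μ) (hmono : IsMonotoneFunctional μ)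
    (hwa : IsWeaklyAdditive μ) (hwmax : WeaklyPreservesMax μ) (hwmin : WeaklyPreservesMin μ)
    (A : Set K) (hA : A.Nonempty) (hAcl : IsClosed A) :
    A ∈ LFamily μ ↔ ∀ O : Set K, IsOpen O → A ⊆ O → ∀ f ∈ CFam A O, μ f ≠ 0 :=
  ⟨fun hL _ _ _ _ hf => (map_lt_zero_of_mem_LFamily hmono hwa hwmax hwmin hL hf).ne,
    mem_LFamily_of_forall_map_ne_zero hnorm hmono hwa hA hAcl⟩

/-- for a normed, monotone, weakly additive functional `μ` weakly preserving both
max and min, a nonempty closed `A` belongs to `Λ_μ` iff `μ f ≠ 0` for every open `O ⊇ A` and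
every `f ∈ C_A(O)`. -/
theorem statement3 {K : Type*} [TopologicalSpace K] [CompactSpace K] [T2Space K] [Nonempty K]
    (μ : C(K, ℝ) → ℝ) (hnorm : IsNormedFunctional μ) (hmono : IsMonotoneFunctional μ)
    (hwa : IsWeaklyAdditive μ) (hwmax : WeaklyPreservesMax μ) (hwmin : WeaklyPreservesMin μ)
    (A : Set K) (hA : A.Nonempty) (hAcl : IsClosed A) :
    A ∈ LFamily μ ↔ ∀ O : Set K, IsOpen O → A ⊆ O → ∀ f ∈ CFam A O, μ f ≠ 0 :=
  statement3_general μ hnorm hmono hwa hwmax hwmin A hA hAcl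
end

section
/- Let K be a nonempty compact Hausdorff space and let μ : C(K) → ℝ be a normed, weakly additive functional that preserves min and weakly preserves max. Then s(μ) := {x ∈ K : {x} ∈ Λ_μ} equals the support S(μ), and μ(f) = inf{f(x) : x ∈ S(μ)} for every f ∈ C(K). -/
open Set

variable {K : Type*} [TopologicalSpace K]

/-!
Let `T` be the set of points `x` with `μ g ≤ g x` for every `g`. The heart of the matter is that
every `f` satisfies `f x ≤ μ f` at some point `x ∈ T`, so that `μ f = min_T f`; both descriptions
of the support then reduce to `T` by Urysohn's lemma. By compactness it suffices to meet finitely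
many of the closed conditions `μ g ≤ g x`, and as `μ` preserves finite minima these collapse to a
single function `h`. Normalise `μ f = μ h = 0` and `h ≤ 0`. If no point had `f x ≤ 0 ≤ h x`,
compactness would give `δ > 0` with `f ≥ δ` wherever `h > -δ`, hence
`max (min f (h + δ)) 0 = max (h + δ) 0`, although the two sides have `μ`-values `0` and `δ`.
-/

open ContinuousMap

section

variable {μ : C(K, ℝ) → ℝ}

def minSupport (μ : C(K, ℝ) → ℝ) : Set K := {x | ∀ g : C(K, ℝ), μ g ≤ g x}

lemma isClosed_minSupport (μ : C(K, ℝ) → ℝ) : IsClosed (minSupport μ) := by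
  simp only [minSupport, ofPred_forall]
  exact isClosed_iInter fun g => isClosed_le continuous_const g.continuous

lemma IsNormedFunctional.map_const (hnorm : IsNormedFunctional μ) (hwa : IsWeaklyAdditive μ)
    (c : ℝ) : μ (const K c) = c := by
  have h := hwa 1 (c - 1)
  rwa [show (1 : C(K, ℝ)) + const K (c - 1) = const K c by ext; simp, hnorm,
    add_sub_cancel] at h

lemma IsWeaklyAdditive.map_sub_const_self (hwa : IsWeaklyAdditive μ) (f : C(K, ℝ)) :
    μ (f - const K (μ f)) = 0 := by
  rw [show f - const K (μ f) = f + const K (-μ f) by ext; simp [sub_eq_add_neg], hwa,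
    add_neg_cancel]

lemma PreservesMin.map_finset_inf' (hpmin : PreservesMin μ) {ι : Type*} {s : Finset ι}
    (hs : s.Nonempty) (v : ι → C(K, ℝ)) : μ (s.inf' hs v) = s.inf' hs (μ ∘ v) :=
  Finset.apply_inf'_eq_inf'_comp hs μ hpmin

lemma exists_pos_forall_le_or_le_neg [CompactSpace K] {φ ψ : C(K, ℝ)}
    (h : ∀ x, 0 < φ x ∨ ψ x < 0) : ∃ δ > 0, ∀ x, δ ≤ φ x ∨ ψ x ≤ -δ := by
  obtain ⟨δ, hδ, hle⟩ := isCompact_univ.exists_forall_le' (φ ⊔ -ψ).continuous.continuousOn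
    (a := 0) fun x _ => by simpa [lt_max_iff] using h x
  refine ⟨δ, hδ, fun x => ?_⟩
  have hx := hle x (mem_univ x)
  simp only [sup_apply, ContinuousMap.neg_apply, le_max_iff] at hx
  exact hx.imp_right fun h => by linarith

lemma exists_nonpos_and_nonneg [CompactSpace K] (hwa : IsWeaklyAdditive μ)
    (hpmin : PreservesMin μ) (hwmax : WeaklyPreservesMax μ) {f h : C(K, ℝ)} (hf : μ f = 0)
    (hh : μ h = 0) (hh0 : h ≤ 0) : ∃ x, f x ≤ 0 ∧ 0 ≤ h x := by
  by_contra! hcon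
  obtain ⟨δ, hδ, hsep⟩ := exists_pos_forall_le_or_le_neg (φ := f) (ψ := h)
    fun x => (lt_or_ge 0 (f x)).imp_right (hcon x)
  have hcut : (f ⊓ (h + const K δ)) ⊔ const K 0 = (h + const K δ) ⊔ const K 0 := by
    ext x
    simp only [sup_apply, inf_apply, ContinuousMap.add_apply, const_apply]
    rcases hsep x with hx | hx
    · have hx0 : h x ≤ 0 := hh0 x
      rw [min_eq_right (by linarith)]
    · rw [max_eq_right (min_le_of_right_le (by linarith)), max_eq_right (by linarith)]
  have hμ := congrArg μ hcut
  rw [hwmax, hwmax, hpmin, hwa, hf, hh] at hμ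
  simp only [zero_add, min_eq_left hδ.le, max_self, max_eq_left hδ.le] at hμ
  exact hδ.ne hμ

lemma exists_le_map_and_map_le [CompactSpace K] (hnorm : IsNormedFunctional μ)
    (hwa : IsWeaklyAdditive μ) (hpmin : PreservesMin μ) (hwmax : WeaklyPreservesMax μ)
    (f h : C(K, ℝ)) : ∃ x, f x ≤ μ f ∧ μ h ≤ h x := by
  have hh : μ ((h - const K (μ h)) ⊓ const K 0) = 0 := by
    rw [hpmin, hwa.map_sub_const_self, hnorm.map_const hwa, min_self]
  obtain ⟨x, hfx, hhx⟩ := exists_nonpos_and_nonneg hwa hpmin hwmax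
    (hwa.map_sub_const_self f) hh inf_le_right
  have hhx' : 0 ≤ (h - const K (μ h)) x := hhx.trans
    ((inf_le_left : (h - const K (μ h)) ⊓ const K 0 ≤ _) x)
  simp only [ContinuousMap.sub_apply, const_apply, sub_nonneg, sub_nonpos] at hfx hhx'
  exact ⟨x, hfx, hhx'⟩

lemma exists_mem_minSupport_le [CompactSpace K] (hnorm : IsNormedFunctional μ)
    (hwa : IsWeaklyAdditive μ) (hpmin : PreservesMin μ) (hwmax : WeaklyPreservesMax μ)
    (f : C(K, ℝ)) : ∃ x ∈ minSupport μ, f x ≤ μ f := by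
  have hfinite (u : Finset C(K, ℝ)) :
      ({x | f x ≤ μ f} ∩ ⋂ g ∈ u, {x | μ g ≤ g x}).Nonempty := by
    rcases u.eq_empty_or_nonempty with rfl | hu
    · obtain ⟨x, hfx, -⟩ := exists_le_map_and_map_le hnorm hwa hpmin hwmax f 0
      exact ⟨x, hfx, by simp⟩
    obtain ⟨x, hfx, hx⟩ := exists_le_map_and_map_le hnorm hwa hpmin hwmax f
      (u.inf' hu fun g => g - const K (μ g))
    refine ⟨x, hfx, mem_iInter₂.2 fun g hg => ?_⟩
    have hμ : μ ∘ (fun g => g - const K (μ g)) = fun _ => 0 := funext hwa.map_sub_const_self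
    rw [hpmin.map_finset_inf', hμ, Finset.inf'_const, inf'_apply] at hx
    simpa [sub_nonneg] using hx.trans (Finset.inf'_le _ hg)
  obtain ⟨x, hfx, hx⟩ := (isClosed_le f.continuous continuous_const).isCompact
    |>.inter_iInter_nonempty _ (fun g => isClosed_le continuous_const g.continuous) hfinite
  exact ⟨x, fun g => mem_iInter.1 hx g, hfx⟩

lemma isLeast_image_minSupport [CompactSpace K] (hnorm : IsNormedFunctional μ)
    (hwa : IsWeaklyAdditive μ) (hpmin : PreservesMin μ) (hwmax : WeaklyPreservesMax μ)
    (f : C(K, ℝ)) : IsLeast (f '' minSupport μ) (μ f) := by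
  obtain ⟨x, hx, hfx⟩ := exists_mem_minSupport_le hnorm hwa hpmin hwmax f
  exact ⟨⟨x, hx, le_antisymm hfx (hx f)⟩, by rintro _ ⟨y, hy, rfl⟩; exact hy f⟩

lemma functionalSupport_eq_minSupport [CompactSpace K] [T2Space K]
    (hnorm : IsNormedFunctional μ) (hwa : IsWeaklyAdditive μ) (hpmin : PreservesMin μ)
    (hwmax : WeaklyPreservesMax μ) : functionalSupport μ = minSupport μ := by
  refine Subset.antisymm (fun x hx => ?_) fun x hx O hO hxO => ?_
  · by_contra hxT
    obtain ⟨f, g, hfg, hne⟩ := hx _ (isClosed_minSupport μ).isOpen_compl hxT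
    refine hne ((isLeast_image_minSupport hnorm hwa hpmin hwmax f).unique ?_)
    rw [image_congr fun y hy => hfg y (not_not_intro hy)]
    exact isLeast_image_minSupport hnorm hwa hpmin hwmax g
  · obtain ⟨u, hu0, hu1, -⟩ := exists_continuous_zero_one_of_isClosed hO.isClosed_compl
      isClosed_singleton (disjoint_singleton_right.2 (not_not_intro hxO))
    refine ⟨0, -u, fun y hy => by simp [hu0 hy], fun h => ?_⟩
    have hux := hx (-u)
    rw [← h, ← const_zero, hnorm.map_const hwa] at hux
    norm_num [hu1 (mem_singleton x)] at hux

lemma setOf_singleton_mem_LFamily [CompactSpace K] [T2Space K]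
    (hnorm : IsNormedFunctional μ) (hwa : IsWeaklyAdditive μ) (hpmin : PreservesMin μ)
    (hwmax : WeaklyPreservesMax μ) : {x : K | {x} ∈ LFamily μ} = minSupport μ := by
  ext x
  refine ⟨fun ⟨_, _, hL⟩ => ?_, fun hx => ⟨singleton_nonempty x, isClosed_singleton,
    fun B hB hxB => ?_⟩⟩
  · by_contra hx
    obtain ⟨g, hg0, -, hgpos⟩ := hL _ (isClosed_minSupport μ) (singleton_inter_eq_empty.2 hx)
    obtain ⟨y, hy, hgy⟩ := exists_mem_minSupport_le hnorm hwa hpmin hwmax g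
    linarith [hgpos y hy]
  · obtain ⟨u, hu0, hu1, hu⟩ := exists_continuous_zero_one_of_isClosed isClosed_singleton hB
      (disjoint_iff_inter_eq_empty.2 hxB)
    have hux : u x = 0 := hu0 rfl
    have hμu : 0 ≤ μ u := by
      rw [← sup_eq_left.2 (show const K 0 ≤ u from fun y => (hu y).1), hwmax]
      exact le_max_right _ _
    exact ⟨u, le_antisymm (hux ▸ hx u) hμu, fun y hy => by rw [hy, hux],
      fun y hy => by rw [hu1 hy]; exact one_pos⟩

end

theorem statement5_general {K : Type*} [TopologicalSpace K] [CompactSpace K] [T2Space K]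
    (μ : C(K, ℝ) → ℝ) (hnorm : IsNormedFunctional μ) (hwa : IsWeaklyAdditive μ)
    (hpmin : PreservesMin μ) (hwmax : WeaklyPreservesMax μ) :
    {x : K | {x} ∈ LFamily μ} = functionalSupport μ ∧
    ∀ f : C(K, ℝ), μ f = sInf ((f : K → ℝ) '' functionalSupport μ) := by
  rw [functionalSupport_eq_minSupport hnorm hwa hpmin hwmax]
  exact ⟨setOf_singleton_mem_LFamily hnorm hwa hpmin hwmax,
    fun f => (isLeast_image_minSupport hnorm hwa hpmin hwmax f).csInf_eq.symm⟩

/-- for a normed, weakly additive functional `μ` preserving min and weakly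
preserving max, `s(μ) = S(μ)` and `μ f = inf {f x : x ∈ S(μ)}` for every `f`. -/
theorem statement5 {K : Type*} [TopologicalSpace K] [CompactSpace K] [T2Space K] [Nonempty K]
    (μ : C(K, ℝ) → ℝ) (hnorm : IsNormedFunctional μ) (hwa : IsWeaklyAdditive μ)
    (hpmin : PreservesMin μ) (hwmax : WeaklyPreservesMax μ) :
    {x : K | {x} ∈ LFamily μ} = functionalSupport μ ∧
    ∀ f : C(K, ℝ), μ f = sInf ((f : K → ℝ) '' functionalSupport μ) :=
  statement5_general μ hnorm hwa hpmin hwmax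
end

section
/- Let K be a nonempty compact Hausdorff space and let μ : C(K) → ℝ be a normed, weakly additive functional that preserves max and weakly preserves min. Then μ(f) = sup{f(x) : x ∈ S(μ)} for every f ∈ C(K), where S(μ) is the (nonempty) support of μ. -/
open Set

variable {K : Type*} [TopologicalSpace K]

/-!
The support is the set of points `x` with `g x ≤ μ g` for every `g`, and `μ f` is the maximum
of `f` on it; the work is to find a point of it where `f ≥ μ f`. Truncating `f` to `f ⊓ μ f`,
which `μ` leaves unchanged, we may assume `f ≤ μ f`. If then `s` is the maximum of `f - g` on
`{f ≥ μ f - ε}`, we have `f ≤ (f ⊓ (μ f - ε)) ⊔ (g + s)`, and applying `μ` to this forces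
`g ≤ μ g` at the maximiser. Hence the closed sets `{g ≤ μ g}` and `{f ≥ μ f}` always meet; as
`μ (⨆ i, (gᵢ - μ gᵢ)) = 0`, finitely many `{gᵢ ≤ μ gᵢ}` meet `{f ≥ μ f}` as well, and
compactness gives a point where all of them do. Finally, Urysohn's lemma puts these points in
the support, while `μ` ignores the values of `f` off them.
-/

open ContinuousMap

def dominatedPoints (μ : C(K, ℝ) → ℝ) : Set K :=
  {x | ∀ g : C(K, ℝ), g x ≤ μ g}

section

variable {μ : C(K, ℝ) → ℝ}

theorem PreservesMax.monotone (hpmax : PreservesMax μ) : Monotone μ := by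
  intro f g hfg
  have h := hpmax f g
  rw [sup_eq_right.mpr hfg] at h
  exact h ▸ le_max_left _ _

theorem IsWeaklyAdditive.apply_const (hwa : IsWeaklyAdditive μ) (hnorm : IsNormedFunctional μ)
    (c : ℝ) : μ (const K c) = c := by
  have h₁ := hwa 0 1
  have h₂ := hwa 0 c
  rw [zero_add] at h₁ h₂
  have hμ1 : μ (const K 1) = 1 := hnorm
  linarith

theorem dominatedPoints_subset_functionalSupport [NormalSpace K] [T1Space K]
    (hnorm : IsNormedFunctional μ) (hwa : IsWeaklyAdditive μ) :
    dominatedPoints μ ⊆ functionalSupport μ := by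
  intro x hx O hO hxO
  obtain ⟨φ, hφ0, hφ1, -⟩ := exists_continuous_zero_one_of_isClosed hO.isClosed_compl
    isClosed_singleton (disjoint_singleton_right.mpr (not_not_intro hxO))
  refine ⟨φ, const K 0, fun y hy => hφ0 hy, ?_⟩
  have : φ x ≤ μ φ := hx φ
  rw [hφ1 rfl, Pi.one_apply] at this
  rw [hwa.apply_const hnorm]
  linarith

variable [CompactSpace K] [Nonempty K]

theorem exists_le_apply (hnorm : IsNormedFunctional μ) (hwa : IsWeaklyAdditive μ)
    (hpmax : PreservesMax μ) (f : C(K, ℝ)) : ∃ x, μ f ≤ f x := by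
  obtain ⟨x, -, hx⟩ := isCompact_univ.exists_isMaxOn univ_nonempty f.continuous.continuousOn
  exact ⟨x, hwa.apply_const hnorm (f x) ▸ hpmax.monotone fun y => hx (mem_univ y)⟩

theorem exists_sub_le_apply_and_apply_le_of_le (hnorm : IsNormedFunctional μ)
    (hwa : IsWeaklyAdditive μ) (hpmax : PreservesMax μ) (hwmin : WeaklyPreservesMin μ)
    {f : C(K, ℝ)} (hf : ∀ x, f x ≤ μ f) (g : C(K, ℝ)) {ε : ℝ} (hε : 0 < ε) :
    ∃ x, μ f - ε ≤ f x ∧ g x ≤ μ g := by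
  set W := {x | μ f - ε ≤ f x}
  have hW : IsCompact W := (isClosed_le continuous_const f.continuous).isCompact
  have hWne : W.Nonempty := by
    obtain ⟨x, hx⟩ := exists_le_apply hnorm hwa hpmax f
    exact ⟨x, show μ f - ε ≤ f x by linarith⟩
  obtain ⟨x₀, hx₀W, hx₀⟩ := hW.exists_isMaxOn hWne (f - g).continuous.continuousOn
  set s := f x₀ - g x₀
  have hfw : f ≤ (f ⊓ const K (μ f - ε)) ⊔ (g + const K s) := by
    rw [ContinuousMap.le_def]
    intro x
    simp only [ContinuousMap.sup_apply, ContinuousMap.inf_apply, ContinuousMap.add_apply,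
      const_apply]
    by_cases hx : x ∈ W
    · have : f x - g x ≤ s := hx₀ hx
      exact le_max_of_le_right (by linarith)
    · exact le_max_of_le_left (le_min le_rfl (not_le.mp hx).le)
  have hμ : μ f ≤ max (μ f - ε) (μ g + s) := by
    have := hpmax.monotone hfw
    rwa [hpmax, hwmin, hwa, min_eq_right (by linarith)] at this
  refine ⟨x₀, hx₀W, ?_⟩
  have := hf x₀
  rcases le_max_iff.mp hμ with h | h <;> linarith

theorem exists_le_apply_and_apply_le_of_le (hnorm : IsNormedFunctional μ)
    (hwa : IsWeaklyAdditive μ) (hpmax : PreservesMax μ) (hwmin : WeaklyPreservesMin μ)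
    {f : C(K, ℝ)} (hf : ∀ x, f x ≤ μ f) (g : C(K, ℝ)) :
    ∃ x, μ f ≤ f x ∧ g x ≤ μ g := by
  set A := {x | g x ≤ μ g}
  have hA : IsCompact A := (isClosed_le g.continuous continuous_const).isCompact
  have hAne : A.Nonempty := by
    obtain ⟨x, -, hx⟩ := exists_sub_le_apply_and_apply_le_of_le hnorm hwa hpmax hwmin hf g one_pos
    exact ⟨x, hx⟩
  obtain ⟨x₀, hx₀A, hx₀⟩ := hA.exists_isMaxOn hAne f.continuous.continuousOn
  refine ⟨x₀, le_of_forall_pos_le_add fun ε hε => ?_, hx₀A⟩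
  obtain ⟨x, hfx, hxA⟩ := exists_sub_le_apply_and_apply_le_of_le hnorm hwa hpmax hwmin hf g hε
  have : f x ≤ f x₀ := hx₀ hxA
  linarith

theorem exists_le_apply_and_apply_le (hnorm : IsNormedFunctional μ)
    (hwa : IsWeaklyAdditive μ) (hpmax : PreservesMax μ) (hwmin : WeaklyPreservesMin μ)
    (f g : C(K, ℝ)) : ∃ x, μ f ≤ f x ∧ g x ≤ μ g := by
  have hμ : μ (f ⊓ const K (μ f)) = μ f := by rw [hwmin, min_self]
  have hle : ∀ x, (f ⊓ const K (μ f)) x ≤ μ (f ⊓ const K (μ f)) := fun x => by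
    rw [hμ]
    exact min_le_right _ _
  obtain ⟨x, hfx, hgx⟩ := exists_le_apply_and_apply_le_of_le hnorm hwa hpmax hwmin hle g
  exact ⟨x, (hμ ▸ hfx).trans (min_le_left _ _), hgx⟩

theorem exists_mem_dominatedPoints_le_apply (hnorm : IsNormedFunctional μ)
    (hwa : IsWeaklyAdditive μ) (hpmax : PreservesMax μ) (hwmin : WeaklyPreservesMin μ)
    (f : C(K, ℝ)) : ∃ x ∈ dominatedPoints μ, μ f ≤ f x := by
  have hfinite (u : Finset C(K, ℝ)) : ({x | μ f ≤ f x} ∩ ⋂ g ∈ u, {x | g x ≤ μ g}).Nonempty := by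
    classical
    let φ : C(K, ℝ) → C(K, ℝ) := fun g => g + const K (-μ g)
    let h := (insert 0 u).sup' (Finset.insert_nonempty 0 u) φ
    have hμh : μ h = 0 := by
      calc μ h = (insert 0 u).sup' (Finset.insert_nonempty 0 u) (μ ∘ φ) :=
            Finset.apply_sup'_eq_sup'_comp _ μ hpmax
        _ = (insert 0 u).sup' (Finset.insert_nonempty 0 u) fun _ => 0 :=
            Finset.sup'_congr _ rfl fun g _ => (hwa g _).trans (add_neg_cancel _)
        _ = 0 := Finset.sup'_const _ _
    obtain ⟨x, hfx, hhx⟩ := exists_le_apply_and_apply_le hnorm hwa hpmax hwmin f h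
    refine ⟨x, hfx, mem_iInter₂.mpr fun g hg => ?_⟩
    have : φ g x ≤ h x := Finset.le_sup' φ (Finset.mem_insert_of_mem hg) x
    simp only [φ, ContinuousMap.add_apply, const_apply] at this
    show g x ≤ μ g
    linarith
  have hF : IsCompact {x | μ f ≤ f x} := (isClosed_le continuous_const f.continuous).isCompact
  obtain ⟨x, hfx, hx⟩ := hF.inter_iInter_nonempty (fun g : C(K, ℝ) => {x | g x ≤ μ g})
    (fun g => isClosed_le g.continuous continuous_const) hfinite
  exact ⟨x, mem_iInter.mp hx, hfx⟩

theorem isGreatest_image_dominatedPoints (hnorm : IsNormedFunctional μ)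
    (hwa : IsWeaklyAdditive μ) (hpmax : PreservesMax μ) (hwmin : WeaklyPreservesMin μ)
    (f : C(K, ℝ)) : IsGreatest (f '' dominatedPoints μ) (μ f) := by
  obtain ⟨x, hx, hfx⟩ := exists_mem_dominatedPoints_le_apply hnorm hwa hpmax hwmin f
  refine ⟨⟨x, hx, le_antisymm (hx f) hfx⟩, ?_⟩
  rintro _ ⟨y, hy, rfl⟩
  exact hy f

theorem functionalSupport_subset_dominatedPoints (hnorm : IsNormedFunctional μ)
    (hwa : IsWeaklyAdditive μ) (hpmax : PreservesMax μ) (hwmin : WeaklyPreservesMin μ) :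
    functionalSupport μ ⊆ dominatedPoints μ := by
  intro x hx g
  by_contra! hgx
  obtain ⟨f₁, f₂, hagree, hne⟩ := hx {y | μ g < g y} (isOpen_lt continuous_const g.continuous) hgx
  have hrep f := (isGreatest_image_dominatedPoints hnorm hwa hpmax hwmin f).csSup_eq
  refine hne ?_
  rw [← hrep f₁, ← hrep f₂]
  exact congrArg sSup (image_congr fun y hy => hagree y (not_lt.mpr (hy g)))

end

/-- for a normed, weakly additive functional `μ` preserving max and weakly
preserving min, the support `S(μ)` is nonempty and `μ f = sup {f x : x ∈ S(μ)}`. -/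
theorem statement6 {K : Type*} [TopologicalSpace K] [CompactSpace K] [T2Space K] [Nonempty K]
    (μ : C(K, ℝ) → ℝ) (hnorm : IsNormedFunctional μ) (hwa : IsWeaklyAdditive μ)
    (hpmax : PreservesMax μ) (hwmin : WeaklyPreservesMin μ) :
    (functionalSupport μ).Nonempty ∧
    ∀ f : C(K, ℝ), μ f = sSup ((f : K → ℝ) '' functionalSupport μ) := by
  have hrep f := isGreatest_image_dominatedPoints hnorm hwa hpmax hwmin f
  have hS : functionalSupport μ = dominatedPoints μ :=
    (functionalSupport_subset_dominatedPoints hnorm hwa hpmax hwmin).antisymm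
      (dominatedPoints_subset_functionalSupport hnorm hwa)
  rw [hS]
  exact ⟨(hrep 0).nonempty.of_image, fun f => (hrep f).csSup_eq.symm⟩
end
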